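/- Let g and V be vector spaces over a field of characteristic 0, let [·,·]: g × g → g be a skew-symmetric bilinear map and ρ: g → End(V) a linear map, and let R: V → g be a linear map. Define the skew-symmetric bilinear map Δ on g ⊕ V by Δ((x,u),(y,v)) = ([x,y], ρ(x)v − ρ(y)u), and the linear map R̂ on g ⊕ V by R̂(x,u) = (R(u), 0). Then for all v, w ∈ V: [[Δ,R̂]_NR, R̂]_NR((0,v),(0,w)) = ( 2[R(v),R(w)] − 2R(ρ(R(v))w) + 2R(ρ(R(w))v), 0 ). -/

import Mathlib

/-- The Nijenhuis–Richardson bracket of a skew-symmetric bilinear map `B` and a linear map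
`N`: `[B,N]_NR(a,b) = B(N(a),b) − B(N(b),a) − N(B(a,b))`. -/
def nr2 {W : Type*} [AddCommGroup W] (B : W → W → W) (N : W → W) : W → W → W :=
  fun a b => B (N a) b - B (N b) a - N (B a b)

/-! Computing `[Δ,R̂]_NR` once in closed form on arbitrary arguments reduces the double bracket
to three evaluations of that formula. Skew-symmetry of `[·,·]` enters only at the end, to merge
`[Rv,Rw] − [Rw,Rv]` into `2[Rv,Rw]`. -/

section SemidirectSum

variable {K g V : Type*} [CommRing K] [AddCommGroup g] [Module K g] [AddCommGroup V] [Module K V]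
  (B : g →ₗ[K] g →ₗ[K] g) (ρ : g →ₗ[K] Module.End K V) (R : V →ₗ[K] g)

/-- The paper's `Δ`. -/
def semidirectBracket (p q : g × V) : g × V :=
  (B p.1 q.1, ρ p.1 q.2 - ρ q.1 p.2)

/-- The paper's `R̂`. -/
def hatMap (p : g × V) : g × V :=
  (R p.2, 0)

theorem nr2_semidirectBracket_hatMap (x y : g) (u v : V) :
    nr2 (semidirectBracket B ρ) (hatMap R) (x, u) (y, v) =
      (B (R u) y - B (R v) x - R (ρ x v - ρ y u), ρ (R u) v - ρ (R v) u) := by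
  simp [nr2, semidirectBracket, hatMap]

theorem nr2_nr2_semidirectBracket_hatMap_zero_zero (v w : V) :
    nr2 (nr2 (semidirectBracket B ρ) (hatMap R)) (hatMap R) (0, v) (0, w) =
      (B (R v) (R w) - B (R w) (R v) - 2 • R (ρ (R v) w) + 2 • R (ρ (R w) v), 0) := by
  rw [nr2]
  simp only [hatMap, nr2_semidirectBracket_hatMap]
  ext
  · simp only [map_zero, LinearMap.zero_apply, map_sub, Prod.fst_sub, sub_zero, zero_sub]
    abel
  · simp

end SemidirectSum

theorem stmt_9_general {K : Type*} [Field K]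
    {g V : Type*} [AddCommGroup g] [Module K g] [AddCommGroup V] [Module K V]
    (B : g →ₗ[K] g →ₗ[K] g) (ρ : g →ₗ[K] Module.End K V) (R : V →ₗ[K] g)
    (hBskew : ∀ x y : g, B x y = - B y x) :
    ∀ v w : V,
      nr2 (nr2 (fun p q : g × V => (B p.1 q.1, ρ p.1 q.2 - ρ q.1 p.2))
            (fun p : g × V => (R p.2, 0)))
          (fun p : g × V => (R p.2, 0)) ((0 : g), v) ((0 : g), w)
        = (2 • B (R v) (R w) - 2 • R (ρ (R v) w) + 2 • R (ρ (R w) v), (0 : V)) := by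
  intro v w
  refine (nr2_nr2_semidirectBracket_hatMap_zero_zero B ρ R v w).trans ?_
  rw [hBskew (R w) (R v), sub_neg_eq_add, ← two_nsmul]

/-- the explicit formula for `[[Δ,R̂]_NR, R̂]_NR((0,v),(0,w))` on `g ⊕ V`,
where `Δ((x,u),(y,v)) = ([x,y], ρ(x)v − ρ(y)u)` and `R̂(x,u) = (R(u),0)`. -/
theorem stmt_9 {K : Type*} [Field K] [CharZero K]
    {g V : Type*} [AddCommGroup g] [Module K g] [AddCommGroup V] [Module K V]
    (B : g →ₗ[K] g →ₗ[K] g) (ρ : g →ₗ[K] Module.End K V) (R : V →ₗ[K] g)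
    (hBskew : ∀ x y : g, B x y = - B y x) :
    ∀ v w : V,
      nr2 (nr2 (fun p q : g × V => (B p.1 q.1, ρ p.1 q.2 - ρ q.1 p.2))
            (fun p : g × V => (R p.2, 0)))
          (fun p : g × V => (R p.2, 0)) ((0 : g), v) ((0 : g), w)
        = (2 • B (R v) (R w) - 2 • R (ρ (R v) w) + 2 • R (ρ (R w) v), (0 : V)) :=
  stmt_9_general B ρ R hBskew
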